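/- (Lemma 4.2, identity (E:R2)) Let (R, φ_R) be a radial ground state. Let ρ ∈ C²([0,∞); ℝ) with ρ'(0) = 0 and |ρ(ξ)| + |ρ'(ξ)| ≤ C·e^{−δξ} for some C, δ > 0, and let ψ ∈ C²([0,∞); ℝ) satisfy ψ''(ξ) + ((d−1)/ξ)·ψ'(ξ) = −R(ξ)^{2σ}·ρ(ξ) for ξ > 0, ψ'(0) = 0, ψ(ξ) → 0 as ξ → ∞ (ψ encodes (−Δ)^{-1}(R^{2σ}ρ)). Suppose ρ solves the linearized equation ρ''(ξ) + ((d−1)/ξ)·ρ'(ξ) − ρ(ξ) + 2σ·φ_R(ξ)·R(ξ)^{2σ−1}·ρ(ξ) + (2σ+1)·ψ(ξ)·R(ξ)^{2σ} = −(ξ²/4)·R(ξ) for all ξ > 0. Then ∫₀^∞ ( R(ξ)·ρ(ξ) − (ξ²/8)·R(ξ)² )·ξ^{d−1} dξ = 0. -/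

import Mathlib

/-!
Write `Λf = (d/2) f + ξ f'` for the generator of the L²-critical scaling and
`W(u, v) = ξ^{d-1} (u' v - u v')` for the radial Wronskian, so that
`W(u, v)' = ξ^{d-1} (Δu · v - u · Δv)` and `ΔΛ = ΛΔ + 2Δ`. Differentiating the ground-state
equations along the scaling (this is where `σd = 2` enters) shows that
`F = W(ρ, ΛR) + W(ψ, Λφ) + ξ^{d+2} R² / 8` has derivative `-2 (Rρ - ξ² R² / 8) ξ^{d-1}`, so the
integral is `-(F(∞) - F(0)) / 2`. `F` vanishes at `0` because of the weight `ξ^{d-1}`, and at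
infinity because `R` and `ρ` decay exponentially while the fluxes `ξ^{d-1} φ'` and `ξ^{d-1} ψ'`
stay bounded, their derivatives being integrable.
-/

open MeasureTheory Set Filter

noncomputable section

/-- A radial ground state of the L²-critical generalized Hartree equation:
a positive radial solution `R` of `ΔR - R + ((-Δ)⁻¹ R^{2σ+1}) R^{2σ} = 0`,
written in radial coordinates, together with the potential `phi` encoding the
radial nonlocal term `(-Δ)⁻¹ R^{2σ+1}`, and assumed to decay exponentially. -/
structure RadialGroundState (d : ℕ) (σ : ℝ) where
  R : ℝ → ℝ
  phi : ℝ → ℝ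
  smooth_R : ContDiffOn ℝ 2 R (Set.Ici 0)
  smooth_phi : ContDiffOn ℝ 2 phi (Set.Ici 0)
  R_pos : ∀ ξ ≥ (0 : ℝ), 0 < R ξ
  R_deriv_zero : deriv R 0 = 0
  phi_eq : ∀ ξ > (0 : ℝ),
    deriv (deriv phi) ξ + ((d : ℝ) - 1) / ξ * deriv phi ξ = -(R ξ ^ (2 * σ + 1))
  phi_deriv_zero : deriv phi 0 = 0
  phi_lim : Filter.Tendsto phi Filter.atTop (nhds 0)
  R_eq : ∀ ξ > (0 : ℝ),
    deriv (deriv R) ξ + ((d : ℝ) - 1) / ξ * deriv R ξ - R ξ + phi ξ * R ξ ^ (2 * σ) = 0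
  decay : ∃ C δ : ℝ, 0 < C ∧ 0 < δ ∧
    ∀ ξ ≥ (0 : ℝ), |R ξ| + |deriv R ξ| ≤ C * Real.exp (-δ * ξ)

open Topology Asymptotics

section OneSidedCalculus

variable {f : ℝ → ℝ} {a x : ℝ}

lemma ContDiffOn.differentiableAt_deriv_of_lt (hf : ContDiffOn ℝ 2 f (Ici a)) (hx : a < x) :
    DifferentiableAt ℝ f x ∧ DifferentiableAt ℝ (deriv f) x := by
  obtain ⟨hf₁, -, hf₂⟩ :=
    (contDiffOn_succ_iff_deriv_of_isOpen (n := 1) isOpen_Ioi).1 (hf.mono Ioi_subset_Ici_self)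
  exact ⟨hf₁.differentiableAt (Ioi_mem_nhds hx),
    (hf₂.differentiableOn one_ne_zero).differentiableAt (Ioi_mem_nhds hx)⟩

lemma ContDiffOn.tendsto_deriv_nhdsGT (hf : ContDiffOn ℝ 1 f (Ici a)) :
    Tendsto (deriv f) (𝓝[>] a) (𝓝 (derivWithin f (Ici a) a)) := by
  refine ((hf.continuousOn_derivWithin (uniqueDiffOn_Ici a) le_rfl a self_mem_Ici).mono_left
    (nhdsWithin_mono _ Ioi_subset_Ici_self)).congr' ?_
  filter_upwards [self_mem_nhdsWithin] with y hy
  exact derivWithin_of_mem_nhds (Ici_mem_nhds hy)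

lemma ContinuousOn.isBigO_one_nhdsGT (hf : ContinuousOn f (Ici a)) :
    f =O[𝓝[>] a] fun _ => (1 : ℝ) :=
  ((hf a self_mem_Ici).mono_left (nhdsWithin_mono _ Ioi_subset_Ici_self)).isBigO_one ℝ

lemma ContDiffOn.eventually_differentiableAt_deriv (hf : ContDiffOn ℝ 2 f (Ici a)) (hx : a < x) :
    ∀ᶠ y in 𝓝 x, DifferentiableAt ℝ f y ∧ DifferentiableAt ℝ (deriv f) y := by
  filter_upwards [Ioi_mem_nhds hx] with y hy using hf.differentiableAt_deriv_of_lt hy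

lemma ContDiffOn.isBigO_one_nhdsGT (hf : ContDiffOn ℝ 1 f (Ici a)) :
    (f =O[𝓝[>] a] fun _ => (1 : ℝ)) ∧ (deriv f =O[𝓝[>] a] fun _ => (1 : ℝ)) :=
  ⟨hf.continuousOn.isBigO_one_nhdsGT, hf.tendsto_deriv_nhdsGT.isBigO_one ℝ⟩

end OneSidedCalculus

lemma isBigO_exp_neg_mul_of_le {b c : ℝ} (hbc : b ≤ c) :
    (fun x => Real.exp (-c * x)) =O[atTop] fun x => Real.exp (-b * x) := by
  refine IsBigO.of_bound 1 ?_
  filter_upwards [eventually_ge_atTop 0] with x hx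
  simp only [Real.norm_eq_abs, Real.abs_exp, one_mul]
  exact Real.exp_le_exp.2 (by nlinarith)

def ExponentialDecay (f : ℝ → ℝ) : Prop :=
  ∃ b, 0 < b ∧ f =O[atTop] fun x => Real.exp (-b * x)

namespace ExponentialDecay

variable {f g : ℝ → ℝ}

lemma of_bound {C δ : ℝ} (hδ : 0 < δ) (h : ∀ x ≥ 0, |f x| ≤ C * Real.exp (-δ * x)) :
    ExponentialDecay f := by
  refine ⟨δ, hδ, IsBigO.of_bound C ?_⟩
  filter_upwards [eventually_ge_atTop 0] with x hx
  simpa [Real.norm_eq_abs, abs_of_pos (Real.exp_pos _)] using h x hx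

lemma of_abs_add_abs_deriv_le (h : ∃ C δ : ℝ, 0 < C ∧ 0 < δ ∧
      ∀ x ≥ (0 : ℝ), |f x| + |deriv f x| ≤ C * Real.exp (-δ * x)) :
    ExponentialDecay f ∧ ExponentialDecay (deriv f) := by
  obtain ⟨C, δ, -, hδ, h⟩ := h
  exact ⟨of_bound (C := C) hδ fun x hx => by linarith [h x hx, abs_nonneg (deriv f x)],
    of_bound (C := C) hδ fun x hx => by linarith [h x hx, abs_nonneg (f x)]⟩

lemma isBigO_one (hf : ExponentialDecay f) : f =O[atTop] fun _ => (1 : ℝ) := by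
  obtain ⟨b, hb, hf⟩ := hf
  simpa using hf.trans (isBigO_exp_neg_mul_of_le hb.le)

lemma tendsto_zero (hf : ExponentialDecay f) : Tendsto f atTop (𝓝 0) := by
  obtain ⟨b, hb, hf⟩ := hf
  refine hf.trans_tendsto ?_
  exact Real.tendsto_exp_atBot.comp (tendsto_id.const_mul_atTop_of_neg (neg_lt_zero.2 hb))

lemma integrableOn_Ioi (hf : ExponentialDecay f) {a : ℝ} (hc : ContinuousOn f (Ici a)) :
    IntegrableOn f (Ioi a) := by
  obtain ⟨b, hb, hf⟩ := hf
  exact integrable_of_isBigO_exp_neg hb hc hf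

lemma congr (hf : ExponentialDecay f) (h : f =ᶠ[atTop] g) : ExponentialDecay g := by
  obtain ⟨b, hb, hf⟩ := hf
  exact ⟨b, hb, hf.congr' h EventuallyEq.rfl⟩

lemma add (hf : ExponentialDecay f) (hg : ExponentialDecay g) :
    ExponentialDecay fun x => f x + g x := by
  obtain ⟨b, hb, hf⟩ := hf
  obtain ⟨c, hc, hg⟩ := hg
  exact ⟨min b c, lt_min hb hc, (hf.trans (isBigO_exp_neg_mul_of_le (min_le_left b c))).add
    (hg.trans (isBigO_exp_neg_mul_of_le (min_le_right b c)))⟩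

lemma mul_isBigO_one (hf : ExponentialDecay f) (hg : g =O[atTop] fun _ => (1 : ℝ)) :
    ExponentialDecay fun x => f x * g x := by
  obtain ⟨b, hb, hf⟩ := hf
  exact ⟨b, hb, by simpa using hf.mul hg⟩

lemma const_mul (hf : ExponentialDecay f) (c : ℝ) : ExponentialDecay fun x => c * f x := by
  simpa only [mul_comm c] using hf.mul_isBigO_one (isBigO_const_const c one_ne_zero atTop)

lemma neg (hf : ExponentialDecay f) : ExponentialDecay fun x => -f x := by
  simpa only [neg_one_mul] using hf.const_mul (-1)

lemma sub (hf : ExponentialDecay f) (hg : ExponentialDecay g) :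
    ExponentialDecay fun x => f x - g x := by
  simpa only [sub_eq_add_neg] using hf.add hg.neg

lemma mul (hf : ExponentialDecay f) (hg : ExponentialDecay g) :
    ExponentialDecay fun x => f x * g x :=
  hf.mul_isBigO_one hg.isBigO_one

lemma pow_mul (hf : ExponentialDecay f) (k : ℕ) : ExponentialDecay fun x => x ^ k * f x := by
  obtain ⟨b, hb, hf⟩ := hf
  have hpow : (fun x : ℝ => x ^ k * Real.exp (-(b / 2) * x)) =O[atTop] fun _ => (1 : ℝ) := by
    have := (tendsto_rpow_mul_exp_neg_mul_atTop_nhds_zero k (b / 2) (by positivity)).isBigO_one ℝ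
    simpa only [Real.rpow_natCast] using this
  refine ⟨b / 2, by positivity, ((isBigO_refl (fun x : ℝ => x ^ k) atTop).mul hf).trans ?_⟩
  have hsplit : (fun x : ℝ => x ^ k * Real.exp (-b * x))
      = fun x => (x ^ k * Real.exp (-(b / 2) * x)) * Real.exp (-(b / 2) * x) := by
    funext x
    rw [mul_assoc, ← Real.exp_add]
    ring_nf
  rw [hsplit]
  simpa using hpow.mul (isBigO_refl (fun x : ℝ => Real.exp (-(b / 2) * x)) atTop)

lemma rpow (hf : ExponentialDecay f) {c : ℝ} (hc : 0 < c) :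
    ExponentialDecay fun x => f x ^ c := by
  obtain ⟨b, hb, hf⟩ := hf
  refine ⟨c * b, by positivity, ?_⟩
  have := hf.rpow hc.le (Eventually.of_forall fun x => (Real.exp_pos _).le)
  refine this.congr' EventuallyEq.rfl (Eventually.of_forall fun x => ?_)
  simp only [← Real.exp_mul]
  ring_nf

end ExponentialDecay

def radialLaplacian (d : ℕ) (f : ℝ → ℝ) (x : ℝ) : ℝ :=
  deriv (deriv f) x + ((d : ℝ) - 1) / x * deriv f x

def dilation (k : ℝ) (f : ℝ → ℝ) (x : ℝ) : ℝ :=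
  k * f x + x * deriv f x

def radialWronskian (d : ℕ) (u v : ℝ → ℝ) (x : ℝ) : ℝ :=
  x ^ (d - 1) * (deriv u x * v x - u x * deriv v x)

section RadialCalculus

variable {d : ℕ} {f u v : ℝ → ℝ} {x : ℝ}

lemma hasDerivAt_pow_mul_deriv (hd : 1 ≤ d) (hx : x ≠ 0) (hf : DifferentiableAt ℝ (deriv f) x) :
    HasDerivAt (fun y => y ^ (d - 1) * deriv f y) (x ^ (d - 1) * radialLaplacian d f x) x := by
  obtain ⟨n, rfl⟩ : ∃ n, d = n + 1 := ⟨d - 1, by omega⟩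
  refine ((hasDerivAt_pow n x).mul hf.hasDerivAt).congr_deriv ?_
  simp only [radialLaplacian, Nat.add_sub_cancel, Nat.cast_add, Nat.cast_one, add_sub_cancel_right]
  rcases n with _ | n
  · simp
  · field_simp
    simp only [Nat.add_sub_cancel, pow_succ]
    ring

lemma hasDerivAt_radialWronskian (hd : 1 ≤ d) (hx : x ≠ 0)
    (hu : DifferentiableAt ℝ u x) (hu' : DifferentiableAt ℝ (deriv u) x)
    (hv : DifferentiableAt ℝ v x) (hv' : DifferentiableAt ℝ (deriv v) x) :
    HasDerivAt (radialWronskian d u v)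
      (x ^ (d - 1) * (radialLaplacian d u x * v x - u x * radialLaplacian d v x)) x := by
  have h : HasDerivAt (fun y => y ^ (d - 1) * deriv u y * v y - u y * (y ^ (d - 1) * deriv v y))
      _ x := ((hasDerivAt_pow_mul_deriv hd hx hu').mul hv.hasDerivAt).sub
        (hu.hasDerivAt.mul (hasDerivAt_pow_mul_deriv hd hx hv'))
  refine (h.congr_deriv (by ring)).congr_of_eventuallyEq (Eventually.of_forall fun y => ?_)
  simp only [radialWronskian]
  ring

lemma DifferentiableAt.dilation (hf : DifferentiableAt ℝ f x) (hf' : DifferentiableAt ℝ (deriv f) x)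
    (k : ℝ) : DifferentiableAt ℝ (dilation k f) x :=
  (hf.const_mul k).add (differentiableAt_id.mul hf')

lemma deriv_dilation (hx : x ≠ 0) (hf : DifferentiableAt ℝ f x)
    (hf' : DifferentiableAt ℝ (deriv f) x) (k : ℝ) :
    deriv (dilation k f) x = (k + 2 - d) * deriv f x + x * radialLaplacian d f x := by
  have h : HasDerivAt (fun y => k * f y + y * deriv f y) _ x :=
    (hf.hasDerivAt.const_mul k).add ((hasDerivAt_id' x).mul hf'.hasDerivAt)
  rw [show dilation k f = fun y => k * f y + y * deriv f y from rfl, h.deriv, radialLaplacian]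
  field_simp
  ring

/-- The commutator identity `[Δ, x·∇] = 2Δ` in radial form. -/
lemma radialLaplacian_dilation (hx : x ≠ 0)
    (hf : ∀ᶠ y in 𝓝 x, DifferentiableAt ℝ f y ∧ DifferentiableAt ℝ (deriv f) y)
    {L' : ℝ} (hL : HasDerivAt (radialLaplacian d f) L' x) (k : ℝ) :
    DifferentiableAt ℝ (deriv (dilation k f)) x ∧
      radialLaplacian d (dilation k f) x = (k + 2) * radialLaplacian d f x + x * L' := by
  have heq : deriv (dilation k f) =ᶠ[𝓝 x]
      fun y => (k + 2 - d) * deriv f y + y * radialLaplacian d f y := by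
    filter_upwards [hf, eventually_ne_nhds hx] with y hy hy0
    exact deriv_dilation hy0 hy.1 hy.2 k
  have hderiv := ((hf.self_of_nhds.2.hasDerivAt.const_mul (k + 2 - d)).add
    ((hasDerivAt_id x).mul hL)).congr_of_eventuallyEq heq
  refine ⟨hderiv.differentiableAt, ?_⟩
  rw [radialLaplacian, hderiv.deriv, heq.eq_of_nhds]
  simp only [radialLaplacian, id]
  field_simp
  ring

end RadialCalculus

section RadialAsymptotics

variable {d : ℕ} {f g u v : ℝ → ℝ}

lemma tendsto_radialWronskian_nhdsGT_zero (hd : 2 ≤ d)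
    (hu : u =O[𝓝[>] 0] fun _ => (1 : ℝ)) (hu' : deriv u =O[𝓝[>] 0] fun _ => (1 : ℝ))
    (hv : v =O[𝓝[>] 0] fun _ => (1 : ℝ)) (hv' : deriv v =O[𝓝[>] 0] fun _ => (1 : ℝ)) :
    Tendsto (radialWronskian d u v) (𝓝[>] 0) (𝓝 0) := by
  have hB : (fun x => deriv u x * v x - u x * deriv v x) =O[𝓝[>] 0] fun _ => (1 : ℝ) := by
    simpa using (hu'.mul hv).sub (hu.mul hv')
  have hpow : Tendsto (fun x : ℝ => x ^ (d - 1)) (𝓝[>] 0) (𝓝 0) := by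
    simpa [zero_pow (by omega : d - 1 ≠ 0)] using
      ((continuous_pow (d - 1)).tendsto (0 : ℝ)).mono_left nhdsWithin_le_nhds
  exact ((isBigO_refl (fun x : ℝ => x ^ (d - 1)) _).mul hB).trans_tendsto (by simpa using hpow)

lemma ContDiffOn.isBigO_one_dilation_nhdsGT_zero (hf : ContDiffOn ℝ 2 f (Ici 0))
    (hL : radialLaplacian d f =O[𝓝[>] 0] fun _ => (1 : ℝ)) (k : ℝ) :
    (dilation k f =O[𝓝[>] 0] fun _ => (1 : ℝ)) ∧
      (deriv (dilation k f) =O[𝓝[>] 0] fun _ => (1 : ℝ)) := by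
  obtain ⟨hf₀, hf₁⟩ := (hf.of_le one_le_two).isBigO_one_nhdsGT
  have hid : (fun x : ℝ => x) =O[𝓝[>] 0] fun _ => (1 : ℝ) :=
    ((continuous_id.tendsto 0).mono_left nhdsWithin_le_nhds).isBigO_one ℝ
  have hmul {g : ℝ → ℝ} (hg : g =O[𝓝[>] 0] fun _ => (1 : ℝ)) :
      (fun x => x * g x) =O[𝓝[>] 0] fun _ => (1 : ℝ) := by
    simpa using hid.mul hg
  refine ⟨(hf₀.const_mul_left k).add (hmul hf₁), ?_⟩
  have heq : (fun y => (k + 2 - d) * deriv f y + y * radialLaplacian d f y)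
      =ᶠ[𝓝[>] 0] deriv (dilation k f) := by
    filter_upwards [self_mem_nhdsWithin] with y hy
    obtain ⟨h₀, h₁⟩ := hf.differentiableAt_deriv_of_lt hy
    exact (deriv_dilation (ne_of_gt hy) h₀ h₁ k).symm
  exact ((hf₁.const_mul_left _).add (hmul hL)).congr' heq EventuallyEq.rfl

lemma isBigO_one_pow_mul_deriv_atTop_of_integrableOn (hd : 1 ≤ d)
    (hf : ∀ x > 0, DifferentiableAt ℝ (deriv f) x)
    (hL : IntegrableOn (fun x => x ^ (d - 1) * radialLaplacian d f x) (Ioi 0)) :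
    (fun x => x ^ (d - 1) * deriv f x) =O[atTop] fun _ => (1 : ℝ) :=
  (tendsto_limUnder_of_hasDerivAt_of_integrableOn_Ioi
    (fun x hx => hasDerivAt_pow_mul_deriv hd (ne_of_gt hx) (hf x hx)) hL).isBigO_one ℝ

lemma ContDiffOn.isBigO_one_pow_mul_deriv_atTop (hd : 1 ≤ d) (hf : ContDiffOn ℝ 2 f (Ici 0))
    (hg : ExponentialDecay g) (hgc : ContinuousOn g (Ici 0))
    (hL : ∀ x > 0, radialLaplacian d f x = g x) :
    (fun x => x ^ (d - 1) * deriv f x) =O[atTop] fun _ => (1 : ℝ) := by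
  refine isBigO_one_pow_mul_deriv_atTop_of_integrableOn hd
    (fun x hx => (hf.differentiableAt_deriv_of_lt hx).2) ?_
  refine ((hg.pow_mul (d - 1)).integrableOn_Ioi
    ((continuous_pow _).continuousOn.mul hgc)).congr_fun (fun x hx => ?_) measurableSet_Ioi
  rw [hL x hx]

lemma tendsto_mul_atTop_zero_of_isBigO_pow_mul {m : ℕ} (hm : 2 ≤ m)
    (h : (fun x => x ^ m * g x) =O[atTop] fun _ => (1 : ℝ)) :
    Tendsto (fun x => x * g x) atTop (𝓝 0) := by
  have hinv : Tendsto (fun x : ℝ => (x ^ (m - 1))⁻¹) atTop (𝓝 0) :=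
    tendsto_inv_atTop_zero.comp (tendsto_pow_atTop (by omega))
  have heq : (fun x => (x ^ (m - 1))⁻¹ * (x ^ m * g x)) =ᶠ[atTop] fun x => x * g x := by
    filter_upwards [eventually_gt_atTop 0] with x hx
    rw [← mul_assoc, ← pow_sub_one_mul (by omega : m ≠ 0), ← mul_assoc,
      inv_mul_cancel₀ (pow_ne_zero _ hx.ne'), one_mul]
  exact (((isBigO_refl _ atTop).mul h).congr' heq EventuallyEq.rfl).trans_tendsto
    (by simpa using hinv)

lemma tendsto_dilation_atTop_zero (hf : Tendsto f atTop (𝓝 0))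
    (hf' : Tendsto (fun x => x * deriv f x) atTop (𝓝 0)) (k : ℝ) :
    Tendsto (dilation k f) atTop (𝓝 0) := by
  have h := (hf.const_mul k).add hf'
  rw [mul_zero, zero_add] at h
  exact h

lemma ContDiffOn.isBigO_one_pow_mul_deriv_dilation_atTop (hd : 1 ≤ d)
    (hf : ContDiffOn ℝ 2 f (Ici 0))
    (hf' : (fun x => x ^ (d - 1) * deriv f x) =O[atTop] fun _ => (1 : ℝ))
    (hL : (fun x => x ^ d * radialLaplacian d f x) =O[atTop] fun _ => (1 : ℝ)) (k : ℝ) :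
    (fun x => x ^ (d - 1) * deriv (dilation k f) x) =O[atTop] fun _ => (1 : ℝ) := by
  have heq : (fun x => (k + 2 - d) * (x ^ (d - 1) * deriv f x) + x ^ d * radialLaplacian d f x)
      =ᶠ[atTop] fun x => x ^ (d - 1) * deriv (dilation k f) x := by
    filter_upwards [eventually_gt_atTop 0] with x hx
    obtain ⟨h₀, h₁⟩ := hf.differentiableAt_deriv_of_lt hx
    rw [deriv_dilation (ne_of_gt hx) h₀ h₁, ← pow_sub_one_mul (by omega : d ≠ 0)]
    ring
  have hsum : (fun x => (k + 2 - d) * (x ^ (d - 1) * deriv f x) + x ^ d * radialLaplacian d f x)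
      =O[atTop] fun _ => (1 : ℝ) := by
    simpa using (hf'.const_mul_left _).add hL
  exact hsum.congr' heq EventuallyEq.rfl

lemma tendsto_radialWronskian_atTop_zero (hu : Tendsto u atTop (𝓝 0))
    (hu' : (fun x => x ^ (d - 1) * deriv u x) =O[atTop] fun _ => (1 : ℝ))
    (hv : Tendsto v atTop (𝓝 0))
    (hv' : (fun x => x ^ (d - 1) * deriv v x) =O[atTop] fun _ => (1 : ℝ)) :
    Tendsto (radialWronskian d u v) atTop (𝓝 0) := by
  have h := (hv.zero_mul_isBoundedUnder_le ((isBigO_one_iff ℝ).1 hu')).sub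
    (hu.zero_mul_isBoundedUnder_le ((isBigO_one_iff ℝ).1 hv'))
  rw [sub_zero] at h
  refine h.congr fun x => ?_
  simp only [radialWronskian]
  ring

end RadialAsymptotics

namespace RadialGroundState

variable {d : ℕ} {σ : ℝ} (G : RadialGroundState d σ) {ρ ψ : ℝ → ℝ}

def virialFlux (ρ ψ : ℝ → ℝ) (x : ℝ) : ℝ :=
  radialWronskian d ρ (dilation (d / 2) G.R) x + radialWronskian d ψ (dilation (d / 2) G.phi) x
    + x ^ (d + 2) * G.R x ^ 2 / 8

lemma exponentialDecay_rpow_R {c : ℝ} (hc : 0 < c) : ExponentialDecay fun x => G.R x ^ c :=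
  (ExponentialDecay.of_abs_add_abs_deriv_le G.decay).1.rpow hc

lemma continuousOn_rpow_R (c : ℝ) : ContinuousOn (fun x => G.R x ^ c) (Ici 0) :=
  G.smooth_R.continuousOn.rpow_const fun x hx => Or.inl (G.R_pos x hx).ne'

lemma radialLaplacian_R {x : ℝ} (hx : 0 < x) :
    radialLaplacian d G.R x = G.R x - G.phi x * G.R x ^ (2 * σ) := by
  have h := G.R_eq x hx
  rw [radialLaplacian]
  linarith

lemma radialLaplacian_phi {x : ℝ} (hx : 0 < x) :
    radialLaplacian d G.phi x = -(G.R x ^ (2 * σ + 1)) :=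
  G.phi_eq x hx

lemma hasDerivAt_radialLaplacian_R {x : ℝ} (hx : 0 < x) :
    HasDerivAt (radialLaplacian d G.R) (deriv G.R x - (deriv G.phi x * G.R x ^ (2 * σ)
      + G.phi x * (deriv G.R x * (2 * σ) * G.R x ^ (2 * σ - 1)))) x := by
  have hR := (G.smooth_R.differentiableAt_deriv_of_lt hx).1.hasDerivAt
  have hφ := (G.smooth_phi.differentiableAt_deriv_of_lt hx).1.hasDerivAt
  refine (hR.sub (hφ.mul (hR.rpow_const (Or.inl (G.R_pos x hx.le).ne')))).congr_of_eventuallyEq ?_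
  filter_upwards [Ioi_mem_nhds hx] with y hy using G.radialLaplacian_R hy

lemma hasDerivAt_radialLaplacian_phi {x : ℝ} (hx : 0 < x) :
    HasDerivAt (radialLaplacian d G.phi)
      (-(deriv G.R x * (2 * σ + 1) * G.R x ^ (2 * σ + 1 - 1))) x := by
  have hR := (G.smooth_R.differentiableAt_deriv_of_lt hx).1.hasDerivAt
  refine (hR.rpow_const (Or.inl (G.R_pos x hx.le).ne')).neg.congr_of_eventuallyEq ?_
  filter_upwards [Ioi_mem_nhds hx] with y hy using G.radialLaplacian_phi hy

lemma exponentialDecay_radialLaplacian_R (hσ : 0 < σ) :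
    ExponentialDecay (radialLaplacian d G.R) := by
  refine ((ExponentialDecay.of_abs_add_abs_deriv_le G.decay).1.sub
    ((G.exponentialDecay_rpow_R (by positivity : 0 < 2 * σ)).mul_isBigO_one
      (G.phi_lim.isBigO_one ℝ))).congr ?_
  filter_upwards [eventually_gt_atTop 0] with x hx
  rw [G.radialLaplacian_R hx, mul_comm]

lemma exponentialDecay_radialLaplacian_phi (hσ : 0 < 2 * σ + 1) :
    ExponentialDecay (radialLaplacian d G.phi) := by
  refine (G.exponentialDecay_rpow_R hσ).neg.congr ?_
  filter_upwards [eventually_gt_atTop 0] with x hx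
  rw [G.radialLaplacian_phi hx]

lemma hasDerivAt_virialFlux (hd : 1 ≤ d) (hσd : σ * d = 2)
    (hρ : ContDiffOn ℝ 2 ρ (Ici 0)) (hψ : ContDiffOn ℝ 2 ψ (Ici 0))
    (hψeq : ∀ ξ > 0, radialLaplacian d ψ ξ = -(G.R ξ ^ (2 * σ) * ρ ξ))
    (hlin : ∀ ξ > 0, radialLaplacian d ρ ξ - ρ ξ + 2 * σ * G.phi ξ * G.R ξ ^ (2 * σ - 1) * ρ ξ
      + (2 * σ + 1) * ψ ξ * G.R ξ ^ (2 * σ) = -(ξ ^ 2 / 4) * G.R ξ)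
    {x : ℝ} (hx : 0 < x) :
    HasDerivAt (G.virialFlux ρ ψ)
      (-2 * ((G.R x * ρ x - x ^ 2 / 8 * G.R x ^ 2) * x ^ (d - 1))) x := by
  have hRdiff := G.smooth_R.eventually_differentiableAt_deriv hx
  have hφdiff := G.smooth_phi.eventually_differentiableAt_deriv hx
  obtain ⟨hR, hR'⟩ := hRdiff.self_of_nhds
  obtain ⟨hφ, hφ'⟩ := hφdiff.self_of_nhds
  obtain ⟨hρ₀, hρ₁⟩ := hρ.differentiableAt_deriv_of_lt hx
  obtain ⟨hψ₀, hψ₁⟩ := hψ.differentiableAt_deriv_of_lt hx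
  obtain ⟨hΛR, hLΛR⟩ :=
    radialLaplacian_dilation hx.ne' hRdiff (G.hasDerivAt_radialLaplacian_R hx) (d / 2)
  obtain ⟨hΛφ, hLΛφ⟩ :=
    radialLaplacian_dilation hx.ne' hφdiff (G.hasDerivAt_radialLaplacian_phi hx) (d / 2)
  have hW₁ := hasDerivAt_radialWronskian hd hx.ne' hρ₀ hρ₁ (hR.dilation hR' _) hΛR
  have hW₂ := hasDerivAt_radialWronskian hd hx.ne' hψ₀ hψ₁ (hφ.dilation hφ' _) hΛφ
  have hW₃ := (((hasDerivAt_pow (d + 2) x).mul (hR.hasDerivAt.pow 2)).div_const 8)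
  refine ((hW₁.add hW₂).add hW₃).congr_deriv ?_
  have hLρ : radialLaplacian d ρ x = ρ x - 2 * σ * G.phi x * G.R x ^ (2 * σ - 1) * ρ x
      - (2 * σ + 1) * ψ x * G.R x ^ (2 * σ) - x ^ 2 / 4 * G.R x := by
    linear_combination hlin x hx
  have hRx : G.R x ≠ 0 := (G.R_pos x hx.le).ne'
  have hR₁ : G.R x ^ (2 * σ) = G.R x ^ (2 * σ - 1) * G.R x := by
    rw [← Real.rpow_add_one hRx]; ring_nf
  have hR₂ : G.R x ^ (2 * σ + 1) = G.R x ^ (2 * σ - 1) * G.R x * G.R x := by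
    rw [← hR₁, Real.rpow_add_one hRx]
  rw [hLΛR, hLΛφ, hψeq x hx, G.radialLaplacian_R hx,
    G.radialLaplacian_phi hx, hLρ, add_sub_cancel_right, hR₂, hR₁]
  obtain ⟨n, rfl⟩ : ∃ n, d = n + 1 := ⟨d - 1, by omega⟩
  simp only [dilation, Pi.pow_apply, Nat.add_sub_cancel, show n + 1 + 2 - 1 = n + 2 by omega,
    pow_add]
  push_cast at hσd ⊢
  -- all that survives the substitutions is a multiple of `σd - 2`
  linear_combination -(x ^ n * (ρ x * G.phi x + ψ x * G.R x) * G.R x ^ (2 * σ - 1) * G.R x) * hσd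

lemma virialFlux_zero (hd : 2 ≤ d) : G.virialFlux ρ ψ 0 = 0 := by
  simp [virialFlux, radialWronskian, zero_pow (by omega : d - 1 ≠ 0)]

lemma continuousWithinAt_virialFlux (hd : 2 ≤ d)
    (hρ : ContDiffOn ℝ 2 ρ (Ici 0)) (hψ : ContDiffOn ℝ 2 ψ (Ici 0)) :
    ContinuousWithinAt (G.virialFlux ρ ψ) (Ici 0) 0 := by
  have hRc := G.smooth_R.continuousOn
  have hLR : radialLaplacian d G.R =O[𝓝[>] 0] fun _ => (1 : ℝ) :=
    (hRc.sub (G.smooth_phi.continuousOn.mul (G.continuousOn_rpow_R _))).isBigO_one_nhdsGT.congr'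
      (by filter_upwards [self_mem_nhdsWithin] with x hx using (G.radialLaplacian_R hx).symm)
      EventuallyEq.rfl
  have hLφ : radialLaplacian d G.phi =O[𝓝[>] 0] fun _ => (1 : ℝ) :=
    (G.continuousOn_rpow_R _).neg.isBigO_one_nhdsGT.congr'
      (by filter_upwards [self_mem_nhdsWithin] with x hx using (G.radialLaplacian_phi hx).symm)
      EventuallyEq.rfl
  obtain ⟨hρ₀, hρ₁⟩ := (hρ.of_le one_le_two).isBigO_one_nhdsGT
  obtain ⟨hψ₀, hψ₁⟩ := (hψ.of_le one_le_two).isBigO_one_nhdsGT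
  obtain ⟨hΛR₀, hΛR₁⟩ := G.smooth_R.isBigO_one_dilation_nhdsGT_zero hLR (d / 2)
  obtain ⟨hΛφ₀, hΛφ₁⟩ := G.smooth_phi.isBigO_one_dilation_nhdsGT_zero hLφ (d / 2)
  have hT : Tendsto (fun x => x ^ (d + 2) * G.R x ^ 2 / 8) (𝓝[>] 0) (𝓝 0) := by
    have := ((((continuous_pow (d + 2)).continuousOn.mul (hRc.pow 2)).div_const 8) 0
      self_mem_Ici).mono_left (nhdsWithin_mono _ Ioi_subset_Ici_self)
    simpa using this
  rw [← continuousWithinAt_Ioi_iff_Ici, ContinuousWithinAt, G.virialFlux_zero hd]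
  have h := ((tendsto_radialWronskian_nhdsGT_zero hd hρ₀ hρ₁ hΛR₀ hΛR₁).add
    (tendsto_radialWronskian_nhdsGT_zero hd hψ₀ hψ₁ hΛφ₀ hΛφ₁)).add hT
  rwa [add_zero, add_zero] at h

lemma tendsto_virialFlux_atTop (hd : 3 ≤ d) (hσ : 0 < σ)
    (hρ : ContDiffOn ℝ 2 ρ (Ici 0)) (hρdecay : ExponentialDecay ρ)
    (hρ'decay : ExponentialDecay (deriv ρ)) (hψ : ContDiffOn ℝ 2 ψ (Ici 0))
    (hψeq : ∀ ξ > 0, radialLaplacian d ψ ξ = -(G.R ξ ^ (2 * σ) * ρ ξ))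
    (hψlim : Tendsto ψ atTop (𝓝 0)) :
    Tendsto (G.virialFlux ρ ψ) atTop (𝓝 0) := by
  obtain ⟨hRdecay, hR'decay⟩ := ExponentialDecay.of_abs_add_abs_deriv_le G.decay
  have hφflux := G.smooth_phi.isBigO_one_pow_mul_deriv_atTop (by omega)
    (G.exponentialDecay_rpow_R (by positivity : 0 < 2 * σ + 1)).neg
    (G.continuousOn_rpow_R _).neg fun x hx => G.radialLaplacian_phi hx
  have hψflux := hψ.isBigO_one_pow_mul_deriv_atTop (by omega)
    ((G.exponentialDecay_rpow_R (by positivity : 0 < 2 * σ)).mul hρdecay).neg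
    ((G.continuousOn_rpow_R _).mul hρ.continuousOn).neg hψeq
  have hW₁ := tendsto_radialWronskian_atTop_zero hρdecay.tendsto_zero
    (hρ'decay.pow_mul _).isBigO_one
    (tendsto_dilation_atTop_zero hRdecay.tendsto_zero
      (by simpa using (hR'decay.pow_mul 1).tendsto_zero) (d / 2))
    (G.smooth_R.isBigO_one_pow_mul_deriv_dilation_atTop (by omega) (hR'decay.pow_mul _).isBigO_one
      ((G.exponentialDecay_radialLaplacian_R hσ).pow_mul d).isBigO_one (d / 2))
  have hW₂ := tendsto_radialWronskian_atTop_zero hψlim hψflux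
    (tendsto_dilation_atTop_zero G.phi_lim
      (tendsto_mul_atTop_zero_of_isBigO_pow_mul (by omega) hφflux) (d / 2))
    (G.smooth_phi.isBigO_one_pow_mul_deriv_dilation_atTop (by omega) hφflux
      ((G.exponentialDecay_radialLaplacian_phi (by positivity)).pow_mul d).isBigO_one
      (d / 2))
  have hT : Tendsto (fun x => x ^ (d + 2) * G.R x ^ 2 / 8) atTop (𝓝 0) :=
    (((hRdecay.mul hRdecay).pow_mul (d + 2)).const_mul (1 / 8)).tendsto_zero.congr fun x => by
      ring
  have h := (hW₁.add hW₂).add hT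
  rwa [add_zero, add_zero] at h

lemma integrableOn_virialIntegrand (hρ : ContinuousOn ρ (Ici 0)) (hρdecay : ExponentialDecay ρ) :
    IntegrableOn (fun x => (G.R x * ρ x - x ^ 2 / 8 * G.R x ^ 2) * x ^ (d - 1)) (Ioi 0) := by
  obtain ⟨hRdecay, -⟩ := ExponentialDecay.of_abs_add_abs_deriv_le G.decay
  have hRc := G.smooth_R.continuousOn
  refine ExponentialDecay.integrableOn_Ioi ?_ (by fun_prop)
  refine (((hRdecay.mul hρdecay).sub (((hRdecay.mul hRdecay).pow_mul 2).const_mul (1 / 8))).pow_mul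
    (d - 1)).congr (Eventually.of_forall fun x => ?_)
  ring

end RadialGroundState

theorem groundState_identity_rho_general
    (d : ℕ) (σ : ℝ) (hd : 3 ≤ d) (hσ : σ = 2 / (d : ℝ))
    (G : RadialGroundState d σ)
    (ρ ψ : ℝ → ℝ)
    (hρ : ContDiffOn ℝ 2 ρ (Set.Ici 0))
    (hρdecay : ∃ C δ : ℝ, 0 < C ∧ 0 < δ ∧
      ∀ ξ ≥ (0 : ℝ), |ρ ξ| + |deriv ρ ξ| ≤ C * Real.exp (-δ * ξ))
    (hψ : ContDiffOn ℝ 2 ψ (Set.Ici 0))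
    (hψeq : ∀ ξ > (0 : ℝ),
      deriv (deriv ψ) ξ + ((d : ℝ) - 1) / ξ * deriv ψ ξ = -(G.R ξ ^ (2 * σ) * ρ ξ))
    (hψlim : Filter.Tendsto ψ Filter.atTop (nhds 0))
    (hlin : ∀ ξ > (0 : ℝ),
      deriv (deriv ρ) ξ + ((d : ℝ) - 1) / ξ * deriv ρ ξ - ρ ξ
        + 2 * σ * G.phi ξ * G.R ξ ^ (2 * σ - 1) * ρ ξ
        + (2 * σ + 1) * ψ ξ * G.R ξ ^ (2 * σ) = -(ξ ^ 2 / 4) * G.R ξ) :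
    ∫ ξ in Set.Ioi (0 : ℝ),
        (G.R ξ * ρ ξ - ξ ^ 2 / 8 * G.R ξ ^ 2) * ξ ^ (d - 1) = 0 := by
  have hσd : σ * d = 2 := by
    rw [hσ]
    field_simp
  have hσ₀ : 0 < σ := by
    rw [hσ]
    positivity
  obtain ⟨hρdecay, hρ'decay⟩ := ExponentialDecay.of_abs_add_abs_deriv_le hρdecay
  have hF := integral_Ioi_of_hasDerivAt_of_tendsto
    (G.continuousWithinAt_virialFlux (by omega) hρ hψ)
    (fun x hx => G.hasDerivAt_virialFlux (by omega) hσd hρ hψ hψeq hlin hx)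
    ((G.integrableOn_virialIntegrand hρ.continuousOn hρdecay).const_mul (-2))
    (G.tendsto_virialFlux_atTop hd hσ₀ hρ hρdecay hρ'decay hψ hψeq hψlim)
  rw [integral_const_mul, G.virialFlux_zero (by omega), sub_zero] at hF
  simpa using hF

/-- Lemma 4.2, identity (E:R2). -/
theorem groundState_identity_rho
    (d : ℕ) (σ : ℝ) (hd : 3 ≤ d) (hσ : σ = 2 / (d : ℝ))
    (G : RadialGroundState d σ)
    (ρ ψ : ℝ → ℝ)
    (hρ : ContDiffOn ℝ 2 ρ (Set.Ici 0)) (hρ0 : deriv ρ 0 = 0)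
    (hρdecay : ∃ C δ : ℝ, 0 < C ∧ 0 < δ ∧
      ∀ ξ ≥ (0 : ℝ), |ρ ξ| + |deriv ρ ξ| ≤ C * Real.exp (-δ * ξ))
    (hψ : ContDiffOn ℝ 2 ψ (Set.Ici 0))
    (hψeq : ∀ ξ > (0 : ℝ),
      deriv (deriv ψ) ξ + ((d : ℝ) - 1) / ξ * deriv ψ ξ = -(G.R ξ ^ (2 * σ) * ρ ξ))
    (hψ0 : deriv ψ 0 = 0)
    (hψlim : Filter.Tendsto ψ Filter.atTop (nhds 0))
    (hlin : ∀ ξ > (0 : ℝ),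
      deriv (deriv ρ) ξ + ((d : ℝ) - 1) / ξ * deriv ρ ξ - ρ ξ
        + 2 * σ * G.phi ξ * G.R ξ ^ (2 * σ - 1) * ρ ξ
        + (2 * σ + 1) * ψ ξ * G.R ξ ^ (2 * σ) = -(ξ ^ 2 / 4) * G.R ξ) :
    ∫ ξ in Set.Ioi (0 : ℝ),
        (G.R ξ * ρ ξ - ξ ^ 2 / 8 * G.R ξ ^ 2) * ξ ^ (d - 1) = 0 :=
  groundState_identity_rho_general d σ hd hσ G ρ ψ hρ hρdecay hψ hψeq hψlim hlin
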